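/- arXiv:2007.11303 — 6 statements merged into one kernel-verified Lean document; each statement's English description precedes it below -/
import Mathlib

section
/- Let V : ℝ → ℝ be defined by V(x) = (∫_{θ=0}^{2π} cos θ · exp(x · cos θ) dθ) / (∫_{θ=0}^{2π} exp(x · cos θ) dθ). Then V(0) = 0, V(−x) = −V(x) for all x ∈ ℝ, and for every x > 0 one has 0 < V(x) < x/2. -/
/-!
Write `Z = ∫ e^{x cos θ}` and `A = ∫ sin² θ e^{x cos θ}` over `[0, 2π]`. Integrating by parts
against `e^{x cos θ}`, whose derivative is `-x sin θ e^{x cos θ}`, gives `V x = x A / Z` and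
`Z - 2A = ∫ cos 2θ e^{x cos θ} = x ∫ sin² θ cos θ e^{x cos θ}`. The last integral is positive for
`x > 0`: since `∫ sin² θ cos θ = 0`, it equals `∫ sin² θ · cos θ (e^{x cos θ} - 1)`, and the
integrand is nonnegative. Oddness follows from the shift `θ ↦ θ + π`, which negates `cos θ`.
-/

open Real

/-- The function `V(x) = (∫ cos θ e^{x cos θ} dθ) / (∫ e^{x cos θ} dθ)` over `[0, 2π]`. -/
noncomputable def V (x : ℝ) : ℝ :=
  (∫ θ in (0:ℝ)..(2 * π), Real.cos θ * Real.exp (x * Real.cos θ)) /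
  (∫ θ in (0:ℝ)..(2 * π), Real.exp (x * Real.cos θ))

open MeasureTheory Set

theorem intervalIntegral_pos_of_continuous_of_nonneg {f : ℝ → ℝ} {a b c : ℝ}
    (hf : Continuous f) (hf₀ : ∀ x, 0 ≤ f x) (hc : c ∈ Ioo a b) (hfc : 0 < f c) :
    0 < ∫ x in a..b, f x := by
  rw [intervalIntegral.integral_pos_iff_support_of_nonneg_ae (.of_forall hf₀)
    (hf.intervalIntegrable a b)]
  refine ⟨hc.1.trans hc.2, ?_⟩
  calc 0 < volume (Function.support f ∩ Ioo a b) :=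
        (hf.isOpen_support.inter isOpen_Ioo).measure_pos volume ⟨c, hfc.ne', hc⟩
    _ ≤ volume (Function.support f ∩ Ioc a b) :=
        measure_mono (inter_subset_inter_right _ Ioo_subset_Ioc_self)

theorem mul_exp_mul_sub_one_nonneg {x : ℝ} (hx : 0 ≤ x) (c : ℝ) :
    0 ≤ c * (exp (x * c) - 1) := by
  rcases le_total 0 c with hc | hc
  · exact mul_nonneg hc (sub_nonneg.2 (one_le_exp (mul_nonneg hx hc)))
  · exact mul_nonneg_of_nonpos_of_nonpos hc
      (sub_nonpos.2 (exp_le_one_iff.2 (mul_nonpos_of_nonneg_of_nonpos hx hc)))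

theorem integral_comp_neg_cos (f : ℝ → ℝ) :
    ∫ θ in (0:ℝ)..2 * π, f (-cos θ) = ∫ θ in (0:ℝ)..2 * π, f (cos θ) := by
  have hper : Function.Periodic (fun θ => f (cos θ)) (2 * π) := cos_periodic.comp f
  calc ∫ θ in (0:ℝ)..2 * π, f (-cos θ) = ∫ θ in (0:ℝ)..2 * π, f (cos (θ + π)) := by
        simp only [cos_add_pi]
    _ = ∫ θ in π..π + 2 * π, f (cos θ) := by
        rw [intervalIntegral.integral_comp_add_right (fun θ => f (cos θ)), zero_add, add_comm]
    _ = ∫ θ in (0:ℝ)..2 * π, f (cos θ) := by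
        rw [hper.intervalIntegral_add_eq π 0, zero_add]

theorem V_neg (x : ℝ) : V (-x) = -V x := by
  have hnum := integral_comp_neg_cos (fun c => -c * exp (x * c))
  have hden := integral_comp_neg_cos (fun c => exp (x * c))
  simp only [neg_neg, mul_neg, neg_mul, intervalIntegral.integral_neg] at hnum hden
  simp only [V, neg_mul, hnum, hden, neg_div]

theorem integral_deriv_mul_exp_mul_cos {g g' : ℝ → ℝ} (hg : ∀ t, HasDerivAt g (g' t) t)
    (hg' : IntervalIntegrable g' volume 0 (2 * π)) (hper : g (2 * π) = g 0) (x : ℝ) :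
    ∫ θ in (0:ℝ)..2 * π, g' θ * exp (x * cos θ) =
      x * ∫ θ in (0:ℝ)..2 * π, g θ * sin θ * exp (x * cos θ) := by
  have hexp (t : ℝ) : HasDerivAt (fun θ => exp (x * cos θ)) (exp (x * cos t) * (x * -sin t)) t :=
    ((hasDerivAt_cos t).const_mul x).exp
  have hgc : Continuous g := continuous_iff_continuousAt.2 fun t => (hg t).continuousAt
  have hparts := intervalIntegral.integral_deriv_mul_eq_sub (fun t _ => hg t) (fun t _ => hexp t)
    hg' ((by fun_prop : Continuous fun t => exp (x * cos t) * (x * -sin t)).intervalIntegrable _ _)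
  rw [hper, cos_two_pi, cos_zero, sub_self] at hparts
  have hsplit : ∫ θ in (0:ℝ)..2 * π, (g' θ * exp (x * cos θ) -
      x * (g θ * sin θ * exp (x * cos θ))) = 0 := by
    rw [← hparts]; congr 1; ext θ; ring
  rw [intervalIntegral.integral_sub (hg'.mul_continuousOn (by fun_prop))
    ((by fun_prop : Continuous _).intervalIntegrable _ _), intervalIntegral.integral_const_mul]
    at hsplit
  linarith

theorem integral_exp_mul_cos_pos (x : ℝ) : 0 < ∫ θ in (0:ℝ)..2 * π, exp (x * cos θ) :=
  intervalIntegral.intervalIntegral_pos_of_pos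
    ((by fun_prop : Continuous _).intervalIntegrable _ _) (fun _ => exp_pos _) (by positivity)

theorem integral_sin_sq_mul_exp_mul_cos_pos (x : ℝ) :
    0 < ∫ θ in (0:ℝ)..2 * π, sin θ ^ 2 * exp (x * cos θ) :=
  intervalIntegral_pos_of_continuous_of_nonneg (by fun_prop) (fun _ => by positivity)
    (c := π / 2) ⟨by positivity, by linarith [pi_pos]⟩ (by simp)

theorem integral_sin_sq_mul_cos_mul_exp_mul_cos_pos {x : ℝ} (hx : 0 < x) :
    0 < ∫ θ in (0:ℝ)..2 * π, sin θ ^ 2 * cos θ * exp (x * cos θ) := by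
  have hzero : ∫ θ in (0:ℝ)..2 * π, sin θ ^ 2 * cos θ = 0 := by
    rw [integral_sin_sq_mul_cos]; simp
  have hπ4 : 0 < cos (π / 4) := by rw [cos_pi_div_four]; positivity
  calc 0 < ∫ θ in (0:ℝ)..2 * π, sin θ ^ 2 * (cos θ * (exp (x * cos θ) - 1)) :=
        intervalIntegral_pos_of_continuous_of_nonneg (by fun_prop)
          (fun θ => mul_nonneg (sq_nonneg _) (mul_exp_mul_sub_one_nonneg hx.le _))
          (c := π / 4) ⟨by positivity, by linarith [pi_pos]⟩
          (mul_pos (pow_pos (sin_pos_of_pos_of_lt_pi (by positivity) (by linarith [pi_pos])) 2)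
            (mul_pos hπ4 (sub_pos.2 (one_lt_exp_iff.2 (mul_pos hx hπ4)))))
    _ = ∫ θ in (0:ℝ)..2 * π, sin θ ^ 2 * cos θ * exp (x * cos θ) - sin θ ^ 2 * cos θ := by
        congr 1; ext θ; ring
    _ = ∫ θ in (0:ℝ)..2 * π, sin θ ^ 2 * cos θ * exp (x * cos θ) := by
        rw [intervalIntegral.integral_sub ((by fun_prop : Continuous _).intervalIntegrable _ _)
          ((by fun_prop : Continuous _).intervalIntegrable _ _), hzero, sub_zero]

theorem integral_cos_mul_exp_mul_cos (x : ℝ) :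
    ∫ θ in (0:ℝ)..2 * π, cos θ * exp (x * cos θ) =
      x * ∫ θ in (0:ℝ)..2 * π, sin θ ^ 2 * exp (x * cos θ) := by
  simpa only [← sq] using integral_deriv_mul_exp_mul_cos hasDerivAt_sin
    (continuous_cos.intervalIntegrable _ _) (by simp) x

theorem integral_exp_mul_cos_sub_two_mul (x : ℝ) :
    (∫ θ in (0:ℝ)..2 * π, exp (x * cos θ)) -
        2 * ∫ θ in (0:ℝ)..2 * π, sin θ ^ 2 * exp (x * cos θ) =
      x * ∫ θ in (0:ℝ)..2 * π, sin θ ^ 2 * cos θ * exp (x * cos θ) := by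
  have hparts := integral_deriv_mul_exp_mul_cos
    (fun t => (hasDerivAt_sin t).fun_mul (hasDerivAt_cos t))
    ((by fun_prop : Continuous fun t => cos t * cos t + sin t * -sin t).intervalIntegrable _ _)
    (by simp) x
  calc (∫ θ in (0:ℝ)..2 * π, exp (x * cos θ)) -
        2 * ∫ θ in (0:ℝ)..2 * π, sin θ ^ 2 * exp (x * cos θ)
      = ∫ θ in (0:ℝ)..2 * π, exp (x * cos θ) - 2 * (sin θ ^ 2 * exp (x * cos θ)) := by
        rw [intervalIntegral.integral_sub ((by fun_prop : Continuous _).intervalIntegrable _ _)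
          ((by fun_prop : Continuous _).intervalIntegrable _ _),
          intervalIntegral.integral_const_mul]
    _ = x * ∫ θ in (0:ℝ)..2 * π, sin θ * cos θ * sin θ * exp (x * cos θ) := by
        rw [← hparts]; congr 1; ext θ
        linear_combination -exp (x * cos θ) * sin_sq_add_cos_sq θ
    _ = x * ∫ θ in (0:ℝ)..2 * π, sin θ ^ 2 * cos θ * exp (x * cos θ) := by
        congr 2; ext θ; ring

theorem V_eq_mul_div (x : ℝ) :
    V x = x * (∫ θ in (0:ℝ)..2 * π, sin θ ^ 2 * exp (x * cos θ)) /
      ∫ θ in (0:ℝ)..2 * π, exp (x * cos θ) := by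
  rw [V, integral_cos_mul_exp_mul_cos]

theorem V_zero_odd_and_bounds :
    V 0 = 0 ∧ (∀ x : ℝ, V (-x) = -V x) ∧ ∀ x : ℝ, 0 < x → 0 < V x ∧ V x < x / 2 := by
  refine ⟨by simp [V_eq_mul_div], V_neg, fun x hx => ?_⟩
  have hZ := integral_exp_mul_cos_pos x
  have hA := integral_sin_sq_mul_exp_mul_cos_pos x
  have hB := integral_sin_sq_mul_cos_mul_exp_mul_cos_pos hx
  have h2A : 2 * (∫ θ in (0:ℝ)..2 * π, sin θ ^ 2 * exp (x * cos θ)) <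
      ∫ θ in (0:ℝ)..2 * π, exp (x * cos θ) := by
    linarith [integral_exp_mul_cos_sub_two_mul x, mul_pos hx hB]
  rw [V_eq_mul_div, div_lt_div_iff₀ hZ two_pos]
  exact ⟨by positivity, by nlinarith⟩
end

section
/- Let V : ℝ → ℝ be defined by V(x) = (∫_{θ=0}^{2π} cos θ · exp(x · cos θ) dθ) / (∫_{θ=0}^{2π} exp(x · cos θ) dθ). Then V is differentiable on ℝ, its derivative at 0 equals 1/2, and V'(x) > 0 for every x ≠ 0; in particular V is strictly increasing on ℝ. -/
/-!
`V(x)` is the mean of `cos` under the probability density proportional to `e^{x cos θ}` on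
`[0, 2π]`. Differentiating under the integral sign, the `k`-th tilted moment
`M_k(x) = ∫ cos^k θ e^{x cos θ} dθ` has derivative `M_{k+1}(x)`, so
`V' = (M₂ M₀ - M₁²) / M₀²` is the variance of `cos` under that density. It is positive because
`cos` is not constant: the quadratic `m ↦ ∫ (cos θ - m)² e^{x cos θ} dθ = M₀ m² - 2 M₁ m + M₂`
is everywhere positive, so its discriminant `4 (M₁² - M₀ M₂)` is negative.
-/

open Real

open Set MeasureTheory Metric intervalIntegral

noncomputable def tiltedMoment (g : ℝ → ℝ) (a b : ℝ) (k : ℕ) (x : ℝ) : ℝ :=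
  ∫ θ in a..b, g θ ^ k * exp (x * g θ)

noncomputable def tiltedMean (g : ℝ → ℝ) (a b x : ℝ) : ℝ :=
  tiltedMoment g a b 1 x / tiltedMoment g a b 0 x

lemma norm_pow_mul_exp_le_of_mem_ball {c x y : ℝ} (hy : y ∈ ball x 1) (k : ℕ) :
    ‖c ^ k * exp (y * c)‖ ≤ |c| ^ k * exp ((|x| + 1) * |c|) := by
  have hy' : |y| ≤ |x| + 1 := by
    have := abs_sub_abs_le_abs_sub y x
    rw [mem_ball, Real.dist_eq] at hy
    linarith
  rw [norm_mul, norm_pow, Real.norm_eq_abs, Real.norm_of_nonneg (exp_pos _).le]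
  refine mul_le_mul_of_nonneg_left (exp_le_exp.2 ?_) (by positivity)
  calc y * c ≤ |y| * |c| := by rw [← abs_mul]; exact le_abs_self _
    _ ≤ (|x| + 1) * |c| := by gcongr

lemma hasDerivAt_pow_mul_exp_mul (c x : ℝ) (k : ℕ) :
    HasDerivAt (fun y => c ^ k * exp (y * c)) (c ^ (k + 1) * exp (x * c)) x :=
  (((hasDerivAt_mul_const c).exp).const_mul (c ^ k)).congr_deriv (by ring)

section

variable {g : ℝ → ℝ} {a b : ℝ}

lemma hasDerivAt_tiltedMoment (hg : Continuous g) (k : ℕ) (x : ℝ) :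
    HasDerivAt (tiltedMoment g a b k) (tiltedMoment g a b (k + 1) x) x :=
  (hasDerivAt_integral_of_dominated_loc_of_deriv_le
    (F := fun y θ => g θ ^ k * exp (y * g θ))
    (bound := fun θ => |g θ| ^ (k + 1) * exp ((|x| + 1) * |g θ|))
    (ball_mem_nhds x one_pos)
    (.of_forall fun y => (by fun_prop : Continuous _).aestronglyMeasurable)
    ((by fun_prop : Continuous _).intervalIntegrable _ _)
    (by fun_prop : Continuous _).aestronglyMeasurable
    (.of_forall fun _ _ _ hy => norm_pow_mul_exp_le_of_mem_ball hy (k + 1))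
    ((by fun_prop : Continuous _).intervalIntegrable _ _)
    (.of_forall fun θ _ y _ => hasDerivAt_pow_mul_exp_mul (g θ) y k)).2

lemma tiltedMoment_zero_pos (hg : Continuous g) (hab : a < b) (x : ℝ) :
    0 < tiltedMoment g a b 0 x :=
  intervalIntegral_pos_of_pos ((by fun_prop : Continuous _).intervalIntegrable _ _)
    (fun θ => by simp [exp_pos]) hab

lemma integral_sq_sub_mul_exp_eq (hg : Continuous g) (m x : ℝ) :
    ∫ θ in a..b, (g θ - m) ^ 2 * exp (x * g θ) =
      tiltedMoment g a b 0 x * m ^ 2 + -2 * tiltedMoment g a b 1 x * m +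
        tiltedMoment g a b 2 x := by
  have hint : ∀ k : ℕ, IntervalIntegrable (fun θ => g θ ^ k * exp (x * g θ)) volume a b :=
    fun k => (by fun_prop : Continuous _).intervalIntegrable _ _
  have hexpand : ∀ θ, (g θ - m) ^ 2 * exp (x * g θ) =
      m ^ 2 * (g θ ^ 0 * exp (x * g θ)) + -2 * m * (g θ ^ 1 * exp (x * g θ)) +
        g θ ^ 2 * exp (x * g θ) := fun θ => by ring
  simp only [hexpand, tiltedMoment]
  rw [integral_add (((hint 0).const_mul _).add ((hint 1).const_mul _)) (hint 2),
    integral_add ((hint 0).const_mul _) ((hint 1).const_mul _),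
    intervalIntegral.integral_const_mul, intervalIntegral.integral_const_mul]
  ring

lemma integral_sq_sub_mul_exp_pos (hg : Continuous g) (hab : a < b)
    (hg_ne : ∃ s ∈ Icc a b, ∃ t ∈ Icc a b, g s ≠ g t) (m x : ℝ) :
    0 < ∫ θ in a..b, (g θ - m) ^ 2 * exp (x * g θ) := by
  obtain ⟨s, hs, t, ht, hst⟩ := hg_ne
  have hne : ∃ u ∈ Icc a b, g u ≠ m := by
    by_cases hsm : g s = m
    · exact ⟨t, ht, fun htm => hst (hsm.trans htm.symm)⟩
    · exact ⟨s, hs, hsm⟩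
  obtain ⟨u, hu, hum⟩ := hne
  exact integral_pos hab (by fun_prop) (fun _ _ => by positivity)
    ⟨u, hu, mul_pos (sq_pos_of_ne_zero (sub_ne_zero.2 hum)) (exp_pos _)⟩

lemma tiltedMoment_one_sq_lt (hg : Continuous g) (hab : a < b)
    (hg_ne : ∃ s ∈ Icc a b, ∃ t ∈ Icc a b, g s ≠ g t) (x : ℝ) :
    tiltedMoment g a b 1 x ^ 2 < tiltedMoment g a b 2 x * tiltedMoment g a b 0 x := by
  have hdisc := discrim_lt_zero (tiltedMoment_zero_pos hg hab x).ne' fun m => by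
    rw [← sq, ← integral_sq_sub_mul_exp_eq hg]
    exact integral_sq_sub_mul_exp_pos hg hab hg_ne m x
  rw [discrim] at hdisc
  linarith

lemma hasDerivAt_tiltedMean (hg : Continuous g) (hab : a < b) (x : ℝ) :
    HasDerivAt (tiltedMean g a b)
      ((tiltedMoment g a b 2 x * tiltedMoment g a b 0 x -
          tiltedMoment g a b 1 x * tiltedMoment g a b 1 x) / tiltedMoment g a b 0 x ^ 2) x :=
  (hasDerivAt_tiltedMoment hg 1 x).div (hasDerivAt_tiltedMoment hg 0 x)
    (tiltedMoment_zero_pos hg hab x).ne'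

lemma deriv_tiltedMean_pos (hg : Continuous g) (hab : a < b)
    (hg_ne : ∃ s ∈ Icc a b, ∃ t ∈ Icc a b, g s ≠ g t) (x : ℝ) :
    0 < deriv (tiltedMean g a b) x := by
  rw [(hasDerivAt_tiltedMean hg hab x).deriv]
  have := tiltedMoment_one_sq_lt hg hab hg_ne x
  exact div_pos (by nlinarith) (pow_pos (tiltedMoment_zero_pos hg hab x) 2)

end

lemma tiltedMoment_apply_zero (g : ℝ → ℝ) (a b : ℝ) (k : ℕ) :
    tiltedMoment g a b k 0 = ∫ θ in a..b, g θ ^ k := by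
  simp [tiltedMoment]

lemma V_eq_tiltedMean : V = tiltedMean cos 0 (2 * π) := by
  ext x
  simp [V, tiltedMean, tiltedMoment]

theorem V_differentiable_deriv_pos :
    Differentiable ℝ V ∧ deriv V 0 = 1 / 2 ∧ (∀ x : ℝ, x ≠ 0 → 0 < deriv V x) ∧
      StrictMono V := by
  have h2π : (0 : ℝ) < 2 * π := by positivity
  have hcos_ne : ∃ s ∈ Icc 0 (2 * π), ∃ t ∈ Icc 0 (2 * π), cos s ≠ cos t :=
    ⟨0, ⟨le_rfl, h2π.le⟩, π, ⟨pi_pos.le, by linarith [pi_pos]⟩, by norm_num⟩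
  have hderiv_pos := deriv_tiltedMean_pos continuous_cos h2π hcos_ne
  rw [V_eq_tiltedMean]
  refine ⟨fun x => (hasDerivAt_tiltedMean continuous_cos h2π x).differentiableAt, ?_,
    fun x _ => hderiv_pos x, strictMono_of_deriv_pos hderiv_pos⟩
  rw [(hasDerivAt_tiltedMean continuous_cos h2π 0).deriv]
  simp only [tiltedMoment_apply_zero, pow_zero, pow_one, intervalIntegral.integral_const,
    integral_cos, integral_cos_sq, sin_two_pi, sin_zero, cos_two_pi, cos_zero]
  field_simp
  ring
end

section
/- Let V : ℝ → ℝ be defined by V(x) = (∫_{θ=0}^{2π} cos θ · exp(x · cos θ) dθ) / (∫_{θ=0}^{2π} exp(x · cos θ) dθ). Then for every x ≠ 0 the derivative of V satisfies V'(x) = −V(x)² − V(x)/x + 1, and the second derivative satisfies V''(x) = 2·V(x)³ + (3/x)·V(x)² + (2/x² − 2)·V(x) − 1/x. -/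
open Real MeasureTheory Metric

/-!
Write `Mₙ(x) = ∫₀^{2π} cosⁿθ e^{x cos θ} dθ` (`cosMoment n x`), so that `V = M₁ / M₀` and
`Mₙ' = Mₙ₊₁`. Integrating `(sin θ e^{x cos θ})' = cos θ e^{x cos θ} - x sin²θ e^{x cos θ}` over a
period gives `M₁ = x (M₀ - M₂)`. Hence `V' = (M₂ M₀ - M₁²) / M₀² = 1 - V / x - V²`, a Riccati
equation, and differentiating it once more gives `V''`.
-/

lemma mul_cos_le_abs_add_one_of_mem_ball {x y : ℝ} (hy : y ∈ ball x 1) (θ : ℝ) :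
    y * cos θ ≤ |x| + 1 := by
  have hy' : |y| < |x| + 1 := by
    have := abs_sub_abs_le_abs_sub y x
    rw [mem_ball, Real.dist_eq] at hy
    linarith
  calc y * cos θ ≤ |y| * |cos θ| := (le_abs_self _).trans (abs_mul _ _).le
    _ ≤ |y| * 1 := by gcongr; exact abs_cos_le_one θ
    _ ≤ |x| + 1 := by linarith

lemma hasDerivAt_integral_mul_exp_mul_cos {f : ℝ → ℝ} (hf : Continuous f) (a b x : ℝ) :
    HasDerivAt (fun y => ∫ θ in a..b, f θ * exp (y * cos θ))
      (∫ θ in a..b, f θ * cos θ * exp (x * cos θ)) x := by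
  have hcont : ∀ y, Continuous fun θ => f θ * exp (y * cos θ) := fun y => by fun_prop
  refine (intervalIntegral.hasDerivAt_integral_of_dominated_loc_of_deriv_le
    (F' := fun y θ => f θ * cos θ * exp (y * cos θ))
    (bound := fun θ => |f θ| * exp (|x| + 1)) (ball_mem_nhds x one_pos)
    (Filter.Eventually.of_forall fun y => (hcont y).aestronglyMeasurable)
    ((hcont x).intervalIntegrable _ _) (by fun_prop) ?_
    ((hf.abs.mul continuous_const).intervalIntegrable _ _) ?_).2
  · refine Filter.Eventually.of_forall fun θ _ y hy => ?_
    rw [Real.norm_eq_abs, abs_mul, abs_mul, Real.abs_exp]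
    have hexp := exp_le_exp.2 (mul_cos_le_abs_add_one_of_mem_ball hy θ)
    calc |f θ| * |cos θ| * exp (y * cos θ) ≤ |f θ| * 1 * exp (|x| + 1) := by
          gcongr; exact abs_cos_le_one θ
      _ = |f θ| * exp (|x| + 1) := by ring
  · refine Filter.Eventually.of_forall fun θ _ y _ => ?_
    have := ((hasDerivAt_mul_const (cos θ)).exp (x := y)).const_mul (f θ)
    exact this.congr_deriv (by ring)

noncomputable def cosMoment (n : ℕ) (x : ℝ) : ℝ :=
  ∫ θ in (0:ℝ)..(2 * π), cos θ ^ n * exp (x * cos θ)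

lemma V_eq_cosMoment_div : V = cosMoment 1 / cosMoment 0 := by
  ext x
  simp [V, cosMoment]

lemma hasDerivAt_cosMoment (n : ℕ) (x : ℝ) :
    HasDerivAt (cosMoment n) (cosMoment (n + 1) x) x := by
  have := hasDerivAt_integral_mul_exp_mul_cos (f := fun θ => cos θ ^ n) (by fun_prop) 0 (2 * π) x
  simp only [← pow_succ] at this
  exact this

lemma cosMoment_zero_pos (x : ℝ) : 0 < cosMoment 0 x := by
  refine intervalIntegral.intervalIntegral_pos_of_pos ?_ (fun θ => ?_) (by positivity)
  · exact Continuous.intervalIntegrable (by fun_prop) _ _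
  · simp [exp_pos]

lemma mul_cosMoment_zero_sub_cosMoment_two (x : ℝ) :
    x * (cosMoment 0 x - cosMoment 2 x) = cosMoment 1 x := by
  have hderiv : ∀ θ ∈ Set.uIcc (0:ℝ) (2 * π),
      HasDerivAt (fun t => sin t * exp (x * cos t))
        (cos θ ^ 1 * exp (x * cos θ) -
          x * (cos θ ^ 0 * exp (x * cos θ) - cos θ ^ 2 * exp (x * cos θ))) θ := by
    intro θ _
    refine ((hasDerivAt_sin θ).mul ((hasDerivAt_cos θ).const_mul x).exp).congr_deriv ?_
    linear_combination (-x * exp (x * cos θ)) * sin_sq_add_cos_sq θ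
  have hint : ∀ n : ℕ, IntervalIntegrable (fun θ => cos θ ^ n * exp (x * cos θ)) volume 0 (2 * π) :=
    fun n => by apply Continuous.intervalIntegrable; fun_prop
  have hftc := intervalIntegral.integral_eq_sub_of_hasDerivAt hderiv
    ((hint 1).sub (((hint 0).sub (hint 2)).const_mul x))
  rw [intervalIntegral.integral_sub (hint 1) (((hint 0).sub (hint 2)).const_mul x),
    intervalIntegral.integral_const_mul, intervalIntegral.integral_sub (hint 0) (hint 2)] at hftc
  simp only [sin_two_pi, sin_zero, zero_mul, sub_zero] at hftc
  rw [cosMoment, cosMoment, cosMoment]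
  linarith

lemma hasDerivAt_V {x : ℝ} (hx : x ≠ 0) : HasDerivAt V (-(V x) ^ 2 - V x / x + 1) x := by
  have hM0 := (cosMoment_zero_pos x).ne'
  have hM2 : cosMoment 2 x = cosMoment 0 x - cosMoment 1 x / x := by
    rw [← mul_cosMoment_zero_sub_cosMoment_two x]
    field_simp
    ring
  rw [V_eq_cosMoment_div]
  refine ((hasDerivAt_cosMoment 1 x).div (hasDerivAt_cosMoment 0 x) hM0).congr_deriv ?_
  rw [Pi.div_apply, hM2]
  field_simp
  ring

lemma hasDerivAt_deriv_V {x : ℝ} (hx : x ≠ 0) :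
    HasDerivAt (deriv V)
      (2 * (V x) ^ 3 + (3 / x) * (V x) ^ 2 + (2 / x ^ 2 - 2) * V x - 1 / x) x := by
  have hriccati : deriv V =ᶠ[nhds x] fun y => -(V y) ^ 2 - V y / y + 1 := by
    filter_upwards [isOpen_compl_singleton.mem_nhds hx] with y hy
    exact (hasDerivAt_V hy).deriv
  have hV := hasDerivAt_V hx
  refine (((hV.pow 2).neg.sub (hV.div (hasDerivAt_id x) hx)).add_const 1).congr_of_eventuallyEq
    hriccati |>.congr_deriv ?_
  simp only [id, Nat.cast_ofNat]
  field_simp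
  ring

theorem V_deriv_formulas (x : ℝ) (hx : x ≠ 0) :
    deriv V x = -(V x) ^ 2 - V x / x + 1 ∧
      deriv (deriv V) x =
        2 * (V x) ^ 3 + (3 / x) * (V x) ^ 2 + (2 / x ^ 2 - 2) * V x - 1 / x :=
  ⟨(hasDerivAt_V hx).deriv, (hasDerivAt_deriv_V hx).deriv⟩
end

section
/- Let K₁ ∈ ℝ, L₁ ∈ ℝ \ {0}, r₁, r₂ ≥ 0, and ψ₁, ψ₂ ∈ ℝ; set ψ = ψ₂ − ψ₁ and x = √(K₁²·r₁² + L₁²·r₂² + 2·K₁·L₁·r₁·r₂·cos ψ), and assume x ≠ 0. Then (∫_{θ=0}^{2π} cos(ψ₁ − θ) · exp(L₁·r₂·cos(ψ₂ − θ) + K₁·r₁·cos(ψ₁ − θ)) dθ) / (∫_{φ=0}^{2π} exp(L₁·r₂·cos(ψ₂ − φ) + K₁·r₁·cos(ψ₁ − φ)) dφ) = ((K₁·r₁ + L₁·r₂·cos ψ)/2) · W(x), and (∫_{θ=0}^{2π} sin(ψ₁ − θ) · exp(L₁·r₂·cos(ψ₂ − θ) + K₁·r₁·cos(ψ₁ −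 θ)) dθ) / (∫_{φ=0}^{2π} exp(L₁·r₂·cos(ψ₂ − φ) + K₁·r₁·cos(ψ₁ − φ)) dφ) = −(L₁·r₂·sin ψ / 2) · W(x). -/
open Real

/-- The function `W(x) = 2 V(x) / x`. -/
noncomputable def W (x : ℝ) : ℝ := 2 * V x / x

/-!
Writing `a = K₁ r₁`, `b = L₁ r₂`, `ψ = ψ₂ - ψ₁` and `t = ψ₁ - θ`, the exponent is
`a cos t + b cos (ψ + t)`, a harmonic of amplitude `x` whose phase `β` satisfies
`x cos β = a + b cos ψ`, `x sin β = -b sin ψ`; so it equals `x cos (t - β)`. After the periodic substitution `t = u + β` both numerators become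
`∫ (p cos u + q sin u) e^{x cos u} du`, in which the sine part vanishes by the symmetry `u ↦ -u`,
leaving `cos β` resp. `sin β` times the numerator of `V x`.
-/

namespace Function.Periodic

variable {g : ℝ → ℝ} {T : ℝ}

theorem intervalIntegral_comp_const_sub (hg : Periodic g T) (c : ℝ) :
    ∫ θ in (0:ℝ)..T, g (c - θ) = ∫ θ in (0:ℝ)..T, g θ := by
  rw [intervalIntegral.integral_comp_sub_left, sub_zero]
  simpa using hg.intervalIntegral_add_eq (c - T) 0

theorem intervalIntegral_comp_add_const (hg : Periodic g T) (c : ℝ) :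
    ∫ θ in (0:ℝ)..T, g (θ + c) = ∫ θ in (0:ℝ)..T, g θ := by
  rw [intervalIntegral.integral_comp_add_right, zero_add, add_comm, hg.intervalIntegral_add_eq c 0,
    zero_add]

end Function.Periodic

theorem exists_angle_sqrt_mul_cos_and_sqrt_mul_sin (c s : ℝ) :
    ∃ β, √(c ^ 2 + s ^ 2) * cos β = c ∧ √(c ^ 2 + s ^ 2) * sin β = s := by
  have hnorm : ‖(⟨c, s⟩ : ℂ)‖ = √(c ^ 2 + s ^ 2) := by
    rw [Complex.norm_def, Complex.normSq_mk, ← sq, ← sq]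
  exact ⟨Complex.arg ⟨c, s⟩, hnorm ▸ Complex.norm_mul_cos_arg _,
    hnorm ▸ Complex.norm_mul_sin_arg _⟩

theorem integral_sin_mul_exp_mul_cos (x : ℝ) :
    ∫ θ in (0:ℝ)..(2 * π), sin θ * exp (x * cos θ) = 0 := by
  have hper : Function.Periodic (fun θ => sin θ * exp (x * cos θ)) (2 * π) := fun θ => by
    simp only [sin_add_two_pi, cos_add_two_pi]
  have hodd := hper.intervalIntegral_comp_const_sub 0
  simp only [zero_sub, sin_neg, cos_neg, neg_mul, intervalIntegral.integral_neg] at hodd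
  linarith

theorem integral_cos_sin_comb_mul_exp_mul_cos (p q x : ℝ) :
    ∫ u in (0:ℝ)..(2 * π), (p * cos u + q * sin u) * exp (x * cos u) =
      p * ∫ u in (0:ℝ)..(2 * π), cos u * exp (x * cos u) := by
  simp only [add_mul, mul_assoc]
  rw [intervalIntegral.integral_add (by apply Continuous.intervalIntegrable; fun_prop)
      (by apply Continuous.intervalIntegrable; fun_prop),
    intervalIntegral.integral_const_mul, intervalIntegral.integral_const_mul,
    integral_sin_mul_exp_mul_cos, mul_zero, add_zero]

theorem integral_cos_add_mul_exp_mul_cos (β x : ℝ) :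
    ∫ u in (0:ℝ)..(2 * π), cos (u + β) * exp (x * cos u) =
      cos β * ∫ u in (0:ℝ)..(2 * π), cos u * exp (x * cos u) := by
  rw [← integral_cos_sin_comb_mul_exp_mul_cos (cos β) (-sin β)]
  congr 1 with u
  rw [cos_add]
  ring

theorem integral_sin_add_mul_exp_mul_cos (β x : ℝ) :
    ∫ u in (0:ℝ)..(2 * π), sin (u + β) * exp (x * cos u) =
      sin β * ∫ u in (0:ℝ)..(2 * π), cos u * exp (x * cos u) := by
  rw [← integral_cos_sin_comb_mul_exp_mul_cos (sin β) (cos β)]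
  congr 1 with u
  rw [sin_add]
  ring

theorem integral_comp_const_sub_mul_exp_mul_cos_sub {f : ℝ → ℝ}
    (hf : Function.Periodic f (2 * π)) (c x β : ℝ) :
    ∫ θ in (0:ℝ)..(2 * π), f (c - θ) * exp (x * cos (c - θ - β)) =
      ∫ u in (0:ℝ)..(2 * π), f (u + β) * exp (x * cos u) := by
  have hper : Function.Periodic (fun t => f t * exp (x * cos (t - β))) (2 * π) := fun t => by
    simp only [hf t, add_sub_right_comm, cos_add_two_pi]
  rw [hper.intervalIntegral_comp_const_sub c, ← hper.intervalIntegral_comp_add_const β]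
  simp only [add_sub_cancel_right]

theorem mul_div_two_mul_W {x : ℝ} (hx : x ≠ 0) (c : ℝ) : x * c / 2 * W x = c * V x := by
  rw [W]
  field_simp

theorem selfconsistency_rewrite_general (K₁ L₁ r₁ r₂ ψ₁ ψ₂ : ℝ)
    (x : ℝ)
    (hxdef : x = Real.sqrt (K₁ ^ 2 * r₁ ^ 2 + L₁ ^ 2 * r₂ ^ 2 +
      2 * K₁ * L₁ * r₁ * r₂ * Real.cos (ψ₂ - ψ₁)))
    (hx : x ≠ 0) :
    (∫ θ in (0:ℝ)..(2 * π), Real.cos (ψ₁ - θ) *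
        Real.exp (L₁ * r₂ * Real.cos (ψ₂ - θ) + K₁ * r₁ * Real.cos (ψ₁ - θ))) /
      (∫ φ in (0:ℝ)..(2 * π),
        Real.exp (L₁ * r₂ * Real.cos (ψ₂ - φ) + K₁ * r₁ * Real.cos (ψ₁ - φ))) =
      (K₁ * r₁ + L₁ * r₂ * Real.cos (ψ₂ - ψ₁)) / 2 * W x ∧
    (∫ θ in (0:ℝ)..(2 * π), Real.sin (ψ₁ - θ) *
        Real.exp (L₁ * r₂ * Real.cos (ψ₂ - θ) + K₁ * r₁ * Real.cos (ψ₁ - θ))) /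
      (∫ φ in (0:ℝ)..(2 * π),
        Real.exp (L₁ * r₂ * Real.cos (ψ₂ - φ) + K₁ * r₁ * Real.cos (ψ₁ - φ))) =
      -(L₁ * r₂ * Real.sin (ψ₂ - ψ₁) / 2) * W x := by
  obtain ⟨β, hcos, hsin⟩ : ∃ β, x * cos β = K₁ * r₁ + L₁ * r₂ * cos (ψ₂ - ψ₁) ∧
      x * sin β = -(L₁ * r₂ * sin (ψ₂ - ψ₁)) := by
    have hamp : x = √((K₁ * r₁ + L₁ * r₂ * cos (ψ₂ - ψ₁)) ^ 2 +
        (-(L₁ * r₂ * sin (ψ₂ - ψ₁))) ^ 2) := by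
      rw [hxdef]
      congr 1
      linear_combination (-(L₁ * r₂) ^ 2) * sin_sq_add_cos_sq (ψ₂ - ψ₁)
    exact hamp ▸ exists_angle_sqrt_mul_cos_and_sqrt_mul_sin _ _
  have hphase : ∀ θ, L₁ * r₂ * cos (ψ₂ - θ) + K₁ * r₁ * cos (ψ₁ - θ) =
      x * cos (ψ₁ - θ - β) := fun θ => by
    rw [show ψ₂ - θ = ψ₂ - ψ₁ + (ψ₁ - θ) by ring, cos_add, cos_sub (ψ₁ - θ)]
    linear_combination (-cos (ψ₁ - θ)) * hcos - sin (ψ₁ - θ) * hsin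
  have hden := integral_comp_const_sub_mul_exp_mul_cos_sub (f := fun _ => 1)
    (fun _ => rfl) ψ₁ x β
  simp only [one_mul] at hden
  simp only [hphase, hden,
    integral_comp_const_sub_mul_exp_mul_cos_sub cos_periodic,
    integral_comp_const_sub_mul_exp_mul_cos_sub sin_periodic,
    integral_cos_add_mul_exp_mul_cos, integral_sin_add_mul_exp_mul_cos]
  rw [← hcos, ← neg_div, ← hsin, mul_div_two_mul_W hx, mul_div_two_mul_W hx]
  exact ⟨mul_div_assoc _ _ _, mul_div_assoc _ _ _⟩

theorem selfconsistency_rewrite (K₁ L₁ r₁ r₂ ψ₁ ψ₂ : ℝ) (hL₁ : L₁ ≠ 0)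
    (hr₁ : 0 ≤ r₁) (hr₂ : 0 ≤ r₂)
    (x : ℝ)
    (hxdef : x = Real.sqrt (K₁ ^ 2 * r₁ ^ 2 + L₁ ^ 2 * r₂ ^ 2 +
      2 * K₁ * L₁ * r₁ * r₂ * Real.cos (ψ₂ - ψ₁)))
    (hx : x ≠ 0) :
    (∫ θ in (0:ℝ)..(2 * π), Real.cos (ψ₁ - θ) *
        Real.exp (L₁ * r₂ * Real.cos (ψ₂ - θ) + K₁ * r₁ * Real.cos (ψ₁ - θ))) /
      (∫ φ in (0:ℝ)..(2 * π),
        Real.exp (L₁ * r₂ * Real.cos (ψ₂ - φ) + K₁ * r₁ * Real.cos (ψ₁ - φ))) =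
      (K₁ * r₁ + L₁ * r₂ * Real.cos (ψ₂ - ψ₁)) / 2 * W x ∧
    (∫ θ in (0:ℝ)..(2 * π), Real.sin (ψ₁ - θ) *
        Real.exp (L₁ * r₂ * Real.cos (ψ₂ - θ) + K₁ * r₁ * Real.cos (ψ₁ - θ))) /
      (∫ φ in (0:ℝ)..(2 * π),
        Real.exp (L₁ * r₂ * Real.cos (ψ₂ - φ) + K₁ * r₁ * Real.cos (ψ₁ - φ))) =
      -(L₁ * r₂ * Real.sin (ψ₂ - ψ₁) / 2) * W x :=
  selfconsistency_rewrite_general K₁ L₁ r₁ r₂ ψ₁ ψ₂ x hxdef hx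
end

section
/- Let K₁ ∈ ℝ and L₁ > 0. Then there exists exactly one r ∈ (0,1) such that V(K₁·r + L₁) = r; that is, the self-consistency curve Γ₁ = { (r₁, r₂) ∈ [0,1]² : V(K₁·r₁ + L₁·r₂) = r₁ } meets the line r₂ = 1 in exactly one point (r, 1) with r ∈ (0,1). -/
open Real Set

/-!
Write `V = G / F` with `F x = ∫ e^{x cos θ} dθ` and `G x = ∫ cos θ e^{x cos θ} dθ`.
Existence is the intermediate value theorem: `V (K r + L) - r` is positive at `r = 0`
because `V > 0` on `(0, ∞)`, and negative at `r = 1` because `V < 1`.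

For uniqueness with `K ≤ 0` it suffices that `V` is monotone, which is the Cauchy–Schwarz
inequality `G² ≤ F · ∫ cos² θ e^{x cos θ} dθ`. For `K > 0`, two solutions `u < v` would give
`V b / b ≥ V a / a` at `a = K u + L < b = K v + L`, whereas `V x / x` is strictly decreasing on
`(0, ∞)`. The integration by parts identities `G x = x ∫ sin² θ e^{x cos θ} dθ` and
`∫ (cos² θ - sin² θ) e^{x cos θ} dθ = x ∫ sin² θ cos θ e^{x cos θ} dθ` reduce this to the
positivity of a function `psi` that vanishes at `0` and has positive derivative on `(0, ∞)`.
-/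

open MeasureTheory Filter intervalIntegral

namespace VonMises

noncomputable def expCosIntegral (ρ : ℝ → ℝ) (x : ℝ) : ℝ :=
  ∫ θ in (0:ℝ)..(2 * π), ρ θ * exp (x * cos θ)

section expCosIntegral

variable {ρ ρ₁ ρ₂ : ℝ → ℝ}

lemma continuous_mul_exp_mul_cos (hρ : Continuous ρ) (x : ℝ) :
    Continuous fun θ => ρ θ * exp (x * cos θ) :=
  hρ.mul (by fun_prop)

lemma intervalIntegrable_mul_exp_mul_cos (hρ : Continuous ρ) (x : ℝ) :
    IntervalIntegrable (fun θ => ρ θ * exp (x * cos θ)) volume 0 (2 * π) :=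
  (continuous_mul_exp_mul_cos hρ x).intervalIntegrable _ _

lemma expCosIntegral_add (h₁ : Continuous ρ₁) (h₂ : Continuous ρ₂) (x : ℝ) :
    expCosIntegral (fun θ => ρ₁ θ + ρ₂ θ) x = expCosIntegral ρ₁ x + expCosIntegral ρ₂ x := by
  simp only [expCosIntegral, add_mul]
  exact integral_add (intervalIntegrable_mul_exp_mul_cos h₁ x)
    (intervalIntegrable_mul_exp_mul_cos h₂ x)

lemma expCosIntegral_sub (h₁ : Continuous ρ₁) (h₂ : Continuous ρ₂) (x : ℝ) :
    expCosIntegral (fun θ => ρ₁ θ - ρ₂ θ) x = expCosIntegral ρ₁ x - expCosIntegral ρ₂ x := by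
  simp only [expCosIntegral, sub_mul]
  exact integral_sub (intervalIntegrable_mul_exp_mul_cos h₁ x)
    (intervalIntegrable_mul_exp_mul_cos h₂ x)

lemma expCosIntegral_const_mul (c : ℝ) (x : ℝ) :
    expCosIntegral (fun θ => c * ρ θ) x = c * expCosIntegral ρ x := by
  simp only [expCosIntegral, mul_assoc, intervalIntegral.integral_const_mul]

lemma expCosIntegral_nonneg (h : ∀ θ, 0 ≤ ρ θ) (x : ℝ) : 0 ≤ expCosIntegral ρ x :=
  integral_nonneg (by positivity) fun θ _ => mul_nonneg (h θ) (exp_pos _).le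

lemma expCosIntegral_pos (hρ : Continuous ρ) (h : ∀ θ, 0 ≤ ρ θ)
    (hpos : ∀ θ ∈ Ioo 0 π, 0 < ρ θ) (x : ℝ) : 0 < expCosIntegral ρ x := by
  rw [expCosIntegral, integral_pos_iff_support_of_nonneg_ae
    (ae_of_all _ fun θ => mul_nonneg (h θ) (exp_pos _).le)
    (intervalIntegrable_mul_exp_mul_cos hρ x)]
  refine ⟨by positivity, (Measure.measure_Ioo_pos _).2 pi_pos |>.trans_le (measure_mono ?_)⟩
  intro θ hθ
  exact ⟨(mul_pos (hpos θ hθ) (exp_pos _)).ne', hθ.1, by linarith [hθ.2, pi_pos]⟩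

lemma hasDerivAt_expCosIntegral (hρ : Continuous ρ) (x₀ : ℝ) :
    HasDerivAt (expCosIntegral ρ) (expCosIntegral (fun θ => ρ θ * cos θ) x₀) x₀ := by
  obtain ⟨C, hC⟩ := isCompact_uIcc.exists_bound_of_continuousOn
    (hρ.continuousOn (s := uIcc 0 (2 * π)))
  have hbound : ∀ θ ∈ uIoc 0 (2 * π), ∀ x ∈ Metric.ball x₀ 1,
      ‖ρ θ * cos θ * exp (x * cos θ)‖ ≤ C * exp (|x₀| + 1) := by
    intro θ hθ x hx
    have hexp : x * cos θ ≤ |x₀| + 1 := by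
      have hcos : x * cos θ ≤ |x| := (le_abs_self _).trans <| by
        rw [abs_mul]; exact mul_le_of_le_one_right (abs_nonneg x) (abs_cos_le_one θ)
      have := abs_sub_abs_le_abs_sub x x₀
      rw [Metric.mem_ball, dist_eq] at hx
      linarith
    rw [norm_mul, norm_mul, norm_of_nonneg (exp_pos _).le]
    have hρθ := hC θ (uIoc_subset_uIcc hθ)
    calc ‖ρ θ‖ * ‖cos θ‖ * exp (x * cos θ) ≤ C * 1 * exp (|x₀| + 1) :=
          mul_le_mul (mul_le_mul hρθ (abs_cos_le_one θ) (norm_nonneg _)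
            ((norm_nonneg _).trans hρθ)) (exp_le_exp.2 hexp) (exp_pos _).le
            (by simpa using (norm_nonneg _).trans hρθ)
      _ = C * exp (|x₀| + 1) := by rw [mul_one]
  have hderiv : ∀ θ x : ℝ, HasDerivAt (fun x => ρ θ * exp (x * cos θ))
      (ρ θ * cos θ * exp (x * cos θ)) x := fun θ x =>
    ((hasDerivAt_mul_const (cos θ)).exp.const_mul (ρ θ)).congr_deriv (by ring)
  exact (hasDerivAt_integral_of_dominated_loc_of_deriv_le (Metric.ball_mem_nhds x₀ one_pos)
    (Eventually.of_forall fun x => (continuous_mul_exp_mul_cos hρ x).aestronglyMeasurable)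
    (intervalIntegrable_mul_exp_mul_cos hρ x₀)
    (continuous_mul_exp_mul_cos (ρ := fun θ => ρ θ * cos θ) (by fun_prop) x₀).aestronglyMeasurable
    (ae_of_all _ hbound) intervalIntegrable_const
    (ae_of_all _ fun θ _ x _ => hderiv θ x)).2

/-- Integration by parts: `(e^{x cos θ})' = -x sin θ e^{x cos θ}`, and the boundary terms cancel
since `f` and `cos` take the same values at `0` and `2π`. -/
lemma expCosIntegral_of_hasDerivAt {f f' : ℝ → ℝ} (hf : ∀ θ, HasDerivAt f (f' θ) θ)
    (hf' : Continuous f') (hper : f (2 * π) = f 0) (x : ℝ) :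
    expCosIntegral f' x = x * expCosIntegral (fun θ => f θ * sin θ) x := by
  have hfsin : Continuous fun θ => f θ * sin θ :=
    (continuous_iff_continuousAt.2 fun θ => (hf θ).continuousAt).mul continuous_sin
  have hparts : ∫ θ in (0:ℝ)..(2 * π),
      (f' θ * exp (x * cos θ) - x * (f θ * sin θ * exp (x * cos θ))) = 0 := by
    rw [integral_eq_sub_of_hasDerivAt (f := fun θ => f θ * exp (x * cos θ))]
    · simp [hper]
    · intro θ _
      exact ((hf θ).mul ((hasDerivAt_cos θ).const_mul x).exp).congr_deriv (by ring)
    · exact (intervalIntegrable_mul_exp_mul_cos hf' x).sub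
        ((intervalIntegrable_mul_exp_mul_cos hfsin x).const_mul x)
  rw [integral_sub (intervalIntegrable_mul_exp_mul_cos hf' x)
    ((intervalIntegrable_mul_exp_mul_cos hfsin x).const_mul x),
    intervalIntegral.integral_const_mul, sub_eq_zero] at hparts
  exact hparts

end expCosIntegral

/-- In terms of modified Bessel functions, `F = 2π I₀` and `G = 2π I₁`, so that `V = I₁ / I₀`. -/
noncomputable def F : ℝ → ℝ := expCosIntegral fun _ => 1
noncomputable def G : ℝ → ℝ := expCosIntegral cos
noncomputable def H : ℝ → ℝ := expCosIntegral fun θ => cos θ * cos θ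
noncomputable def S : ℝ → ℝ := expCosIntegral fun θ => sin θ * sin θ
noncomputable def T : ℝ → ℝ := expCosIntegral fun θ => sin θ * sin θ * cos θ

lemma V_eq_G_div_F (x : ℝ) : V x = G x / F x := by
  simp only [V, G, F, expCosIntegral, one_mul]

lemma F_pos (x : ℝ) : 0 < F x :=
  expCosIntegral_pos continuous_const (fun _ => zero_le_one) (fun _ _ => one_pos) x

lemma G_lt_F (x : ℝ) : G x < F x := by
  rw [← sub_pos, F, G, ← expCosIntegral_sub continuous_const continuous_cos]
  refine expCosIntegral_pos (by fun_prop) (fun θ => sub_nonneg.2 (cos_le_one θ))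
    (fun θ hθ => sub_pos.2 ?_) x
  simpa using cos_lt_cos_of_nonneg_of_le_pi le_rfl hθ.2.le hθ.1

lemma S_pos (x : ℝ) : 0 < S x :=
  expCosIntegral_pos (by fun_prop) (fun θ => mul_self_nonneg _)
    (fun θ hθ => mul_self_pos.2 (sin_pos_of_pos_of_lt_pi hθ.1 hθ.2).ne') x

lemma G_eq_mul_S (x : ℝ) : G x = x * S x :=
  expCosIntegral_of_hasDerivAt hasDerivAt_sin continuous_cos (by simp) x

lemma G_pos {x : ℝ} (hx : 0 < x) : 0 < G x := by
  rw [G_eq_mul_S]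
  exact mul_pos hx (S_pos x)

lemma H_add_S (x : ℝ) : H x + S x = F x := by
  rw [H, S, F, ← expCosIntegral_add (by fun_prop) (by fun_prop)]
  simp only [← sq, cos_sq_add_sin_sq]

lemma H_sub_S (x : ℝ) : H x - S x = x * T x := by
  rw [H, S, T, ← expCosIntegral_sub (by fun_prop) (by fun_prop)]
  convert expCosIntegral_of_hasDerivAt (f := fun θ => sin θ * cos θ)
    (f' := fun θ => cos θ * cos θ - sin θ * sin θ)
    (fun θ => ((hasDerivAt_sin θ).mul (hasDerivAt_cos θ)).congr_deriv (by ring))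
    (by fun_prop) (by simp) x using 3
  funext θ
  ring

lemma T_zero : T 0 = 0 := by
  simpa [T] using expCosIntegral_of_hasDerivAt (f := fun θ => sin θ ^ 3 / 3)
    (fun θ => (((hasDerivAt_sin θ).pow 3).div_const 3).congr_deriv (by ring))
    (by fun_prop) (by simp) 0

lemma monotone_T : Monotone T :=
  monotone_of_hasDerivAt_nonneg (fun x => hasDerivAt_expCosIntegral (by fun_prop) x)
    fun x => expCosIntegral_nonneg (fun θ => by nlinarith [mul_self_nonneg (sin θ * cos θ)]) x

lemma S_le_H (x : ℝ) : S x ≤ H x := by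
  rw [← sub_nonneg, H_sub_S]
  rcases le_total 0 x with hx | hx
  · exact mul_nonneg hx (T_zero ▸ monotone_T hx)
  · exact mul_nonneg_of_nonpos_of_nonpos hx (T_zero ▸ monotone_T hx)

lemma hasDerivAt_F (x : ℝ) : HasDerivAt F (G x) x := by
  have h := hasDerivAt_expCosIntegral (ρ := fun _ => 1) continuous_const x
  simp only [one_mul] at h
  exact h

lemma hasDerivAt_G (x : ℝ) : HasDerivAt G (H x) x :=
  hasDerivAt_expCosIntegral continuous_cos x

/-- Cauchy–Schwarz: the quadratic `t ↦ ∫ (t - cos θ)² e^{x cos θ} dθ` is nonnegative. -/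
lemma sq_G_le_H_mul_F (x : ℝ) : G x ^ 2 ≤ H x * F x := by
  have hquad : ∀ t : ℝ, 0 ≤ F x * (t * t) + (-2 * G x) * t + H x := fun t => by
    have hexpand : expCosIntegral (fun θ => (t - cos θ) ^ 2) x
        = F x * (t * t) + (-2 * G x) * t + H x := by
      rw [show (fun θ => (t - cos θ) ^ 2) = fun θ => (t * t * 1 - 2 * t * cos θ) + cos θ * cos θ
        from funext fun θ => by ring, expCosIntegral_add (by fun_prop) (by fun_prop),
        expCosIntegral_sub (by fun_prop) (by fun_prop), expCosIntegral_const_mul,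
        expCosIntegral_const_mul, F, G, H]
      ring
    exact hexpand ▸ expCosIntegral_nonneg (fun θ => sq_nonneg _) x
  have := discrim_le_zero hquad
  rw [discrim] at this
  nlinarith

lemma hasDerivAt_V (x : ℝ) : HasDerivAt V ((H x * F x - G x ^ 2) / F x ^ 2) x := by
  rw [show V = fun y => G y / F y from funext V_eq_G_div_F]
  exact ((hasDerivAt_G x).div (hasDerivAt_F x) (F_pos x).ne').congr_deriv (by ring)

lemma continuous_V : Continuous V :=
  continuous_iff_continuousAt.2 fun x => (hasDerivAt_V x).continuousAt

lemma monotone_V : Monotone V :=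
  monotone_of_hasDerivAt_nonneg hasDerivAt_V fun x =>
    div_nonneg (sub_nonneg.2 (sq_G_le_H_mul_F x)) (sq_nonneg _)

lemma V_pos {x : ℝ} (hx : 0 < x) : 0 < V x := by
  rw [V_eq_G_div_F]
  exact div_pos (G_pos hx) (F_pos x)

lemma V_lt_one (x : ℝ) : V x < 1 := by
  rw [V_eq_G_div_F, div_lt_one (F_pos x)]
  exact G_lt_F x

/-- `psi x = -(x F x)² (V x / x)'`. -/
noncomputable def psi (x : ℝ) : ℝ := 2 * G x * F x - x * (F x ^ 2 - G x ^ 2)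

lemma hasDerivAt_psi (x : ℝ) : HasDerivAt psi (F x * (H x - S x) + G x ^ 2) x := by
  have hF := hasDerivAt_F x
  have hG := hasDerivAt_G x
  refine ((hG.const_mul 2).mul hF |>.sub ((hasDerivAt_id x).mul ((hF.pow 2).sub (hG.pow 2))))
    |>.congr_deriv ?_
  simp only [id, Pi.sub_apply, Pi.pow_apply]
  linear_combination (2 * G x) * (G_eq_mul_S x) + (F x + 2 * x * G x) * (H_add_S x)

lemma psi_pos {x : ℝ} (hx : 0 < x) : 0 < psi x := by
  have hmono : StrictMonoOn psi (Ici 0) := by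
    refine strictMonoOn_of_hasDerivWithinAt_pos (convex_Ici 0)
      (fun y _ => (hasDerivAt_psi y).continuousAt.continuousWithinAt)
      (fun y _ => (hasDerivAt_psi y).hasDerivWithinAt) fun y hy => ?_
    rw [interior_Ici] at hy
    have := mul_nonneg (F_pos y).le (sub_nonneg.2 (S_le_H y))
    have := pow_pos (G_pos hy) 2
    linarith
  simpa [psi, G_eq_mul_S] using hmono self_mem_Ici hx.le hx

lemma strictAntiOn_V_div : StrictAntiOn (fun x => V x / x) (Ioi 0) := by
  have hderiv : ∀ y ∈ Ioi (0 : ℝ),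
      HasDerivAt (fun x => V x / x) (-psi y / F y ^ 2 / y ^ 2) y := fun y hy => by
    refine ((hasDerivAt_V y).div (hasDerivAt_id y) (ne_of_gt hy)).congr_deriv ?_
    have hF := F_pos y
    have hy : y ≠ 0 := ne_of_gt hy
    rw [V_eq_G_div_F, id, psi]
    field_simp
    linear_combination (y * F y) * (H_add_S y) + F y * (G_eq_mul_S y)
  refine strictAntiOn_of_hasDerivWithinAt_neg (convex_Ioi 0)
    (fun y hy => (hderiv y hy).continuousAt.continuousWithinAt)
    (fun y hy => (hderiv y (interior_subset hy)).hasDerivWithinAt) fun y hy => ?_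
  rw [interior_Ioi] at hy
  exact div_neg_of_neg_of_pos (div_neg_of_neg_of_pos (neg_neg_of_pos (psi_pos hy))
    (pow_pos (F_pos y) 2)) (pow_pos hy 2)

lemma exists_V_affine_eq (K : ℝ) {L : ℝ} (hL : 0 < L) : ∃ r ∈ Ioo 0 1, V (K * r + L) = r := by
  have hcont : ContinuousOn (fun r => V (K * r + L) - r) (Icc 0 1) := by
    have := continuous_V; fun_prop
  obtain ⟨r, hr, hr0⟩ := intermediate_value_Ioo' zero_le_one hcont
    (show (0 : ℝ) ∈ Ioo _ _ from ⟨by linarith [V_lt_one (K * 1 + L)], by simpa using V_pos hL⟩)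
  exact ⟨r, hr, sub_eq_zero.1 hr0⟩

lemma not_lt_of_V_affine_eq {K L u v : ℝ} (hL : 0 < L) (hu : 0 < u)
    (hVu : V (K * u + L) = u) (hVv : V (K * v + L) = v) : ¬ u < v := by
  intro huv
  rcases le_or_gt K 0 with hK | hK
  · have := monotone_V (show K * v + L ≤ K * u + L by nlinarith)
    linarith
  · have ha : 0 < K * u + L := by positivity
    have hab : K * u + L < K * v + L := by nlinarith
    have := strictAntiOn_V_div ha (ha.trans hab) hab
    dsimp only at this
    rw [hVu, hVv, div_lt_div_iff₀ (ha.trans hab) ha] at this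
    nlinarith

end VonMises

theorem gamma1_meets_top_once (K₁ L₁ : ℝ) (hL₁ : 0 < L₁) :
    ∃! r : ℝ, r ∈ Ioo (0:ℝ) 1 ∧ V (K₁ * r + L₁) = r := by
  obtain ⟨r, hr, hVr⟩ := VonMises.exists_V_affine_eq K₁ hL₁
  refine ⟨r, ⟨hr, hVr⟩, fun s ⟨hs, hVs⟩ => le_antisymm ?_ ?_⟩
  · exact not_lt.1 (VonMises.not_lt_of_V_affine_eq hL₁ hr.1 hVr hVs)
  · exact not_lt.1 (VonMises.not_lt_of_V_affine_eq hL₁ hs.1 hVs hVr)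
end

section
/- Let K ∈ ℝ. There exists r > 0 with r = V(K·r) if and only if K > 2; moreover any such r lies in (0,1). -/
/-!
Integration by parts gives `∫ cos θ e^{x cos θ} = x ∫ sin² θ e^{x cos θ}`, so `V x = x q(x)` where
`q = vonMisesMean (sin ·²)` is the mean of `sin²` under the weight `e^{x cos θ}`. Two more
integrations by parts give `∫ (1 - 2 sin² θ) e^{x cos θ} = (x² / 3) ∫ sin⁴ θ e^{x cos θ}`, hence
`q 0 = 1/2` and `0 < q x < 1/2` for `x ≠ 0`. A positive fixed point `r = V (K r)` is a root of
`K q(K r) = 1`, which forces `K > 2`; conversely, for `K > 2` the map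
`r ↦ K q(K r)` is `K / 2 > 1` at `0` and `V K < 1` at `1`.
-/

open Real Set

open intervalIntegral

noncomputable section

def vonMisesIntegral (g : ℝ → ℝ) (x : ℝ) : ℝ :=
  ∫ θ in (0:ℝ)..2 * π, g θ * exp (x * cos θ)

def vonMisesMean (g : ℝ → ℝ) (x : ℝ) : ℝ :=
  vonMisesIntegral g x / vonMisesIntegral (fun _ => 1) x

lemma V_eq_vonMisesMean_cos (x : ℝ) : V x = vonMisesMean cos x := by
  simp only [V, vonMisesMean, vonMisesIntegral, one_mul]

section

variable {f g : ℝ → ℝ}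

lemma vonMisesIntegral_pos (hg : Continuous g) (hg_nonneg : ∀ θ, 0 ≤ g θ) {c : ℝ}
    (hc : c ∈ Icc 0 (2 * π)) (hgc : 0 < g c) (x : ℝ) : 0 < vonMisesIntegral g x :=
  integral_pos (by positivity) (by fun_prop)
    (fun θ _ => mul_nonneg (hg_nonneg θ) (exp_pos _).le) ⟨c, hc, mul_pos hgc (exp_pos _)⟩

lemma vonMisesIntegral_one_pos (x : ℝ) : 0 < vonMisesIntegral (fun _ => 1) x :=
  vonMisesIntegral_pos continuous_const (fun _ => zero_le_one) ⟨le_rfl, by positivity⟩ one_pos x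

lemma vonMisesIntegral_sub (hf : Continuous f) (hg : Continuous g) (x : ℝ) :
    vonMisesIntegral (fun θ => f θ - g θ) x = vonMisesIntegral f x - vonMisesIntegral g x := by
  simp only [vonMisesIntegral, sub_mul]
  exact integral_sub ((by fun_prop : Continuous _).intervalIntegrable _ _)
    ((by fun_prop : Continuous _).intervalIntegrable _ _)

lemma vonMisesIntegral_const_mul (c : ℝ) (x : ℝ) :
    vonMisesIntegral (fun θ => c * g θ) x = c * vonMisesIntegral g x := by
  simp only [vonMisesIntegral, mul_assoc, integral_const_mul]

lemma continuous_vonMisesMean (hg : Continuous g) : Continuous (vonMisesMean g) := by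
  refine Continuous.div ?_ ?_ fun x => (vonMisesIntegral_one_pos x).ne' <;>
    exact continuous_parametric_intervalIntegral_of_continuous' (by fun_prop) _ _

lemma vonMisesIntegral_deriv {f' : ℝ → ℝ} (hf : ∀ θ, HasDerivAt f (f' θ) θ)
    (hf' : Continuous f') (hper : f (2 * π) = f 0) (x : ℝ) :
    vonMisesIntegral f' x = x * vonMisesIntegral (fun θ => f θ * sin θ) x := by
  have hw : ∀ θ, HasDerivAt (fun θ => exp (x * cos θ)) (exp (x * cos θ) * (x * -sin θ)) θ :=
    fun θ => ((hasDerivAt_cos θ).const_mul x).exp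
  have hf_cont : Continuous f := continuous_iff_continuousAt.2 fun θ => (hf θ).continuousAt
  have hparts := integral_deriv_mul_eq_sub (a := 0) (b := 2 * π)
    (fun θ _ => hf θ) (fun θ _ => hw θ) (hf'.intervalIntegrable _ _)
    ((by fun_prop : Continuous _).intervalIntegrable _ _)
  rw [hper, cos_two_pi, cos_zero, sub_self,
    integral_add ((by fun_prop : Continuous _).intervalIntegrable _ _)
      ((by fun_prop : Continuous _).intervalIntegrable _ _)] at hparts
  rw [vonMisesIntegral, eq_neg_of_add_eq_zero_left hparts, vonMisesIntegral,
    ← integral_const_mul, ← integral_neg]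
  exact integral_congr fun θ _ => by ring

end

lemma vonMisesIntegral_cos (x : ℝ) :
    vonMisesIntegral cos x = x * vonMisesIntegral (fun θ => sin θ ^ 2) x := by
  simpa only [← sq] using
    vonMisesIntegral_deriv hasDerivAt_sin continuous_cos (by rw [sin_two_pi, sin_zero]) x

lemma vonMisesIntegral_one_sub_two_mul_sin_sq (x : ℝ) :
    vonMisesIntegral (fun _ => 1) x - 2 * vonMisesIntegral (fun θ => sin θ ^ 2) x
      = x ^ 2 / 3 * vonMisesIntegral (fun θ => sin θ ^ 4) x := by
  have hsin_cos (θ : ℝ) : HasDerivAt (fun θ => sin θ * cos θ) (1 - 2 * sin θ ^ 2) θ :=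
    ((hasDerivAt_sin θ).fun_mul (hasDerivAt_cos θ)).congr_deriv (by
      linear_combination sin_sq_add_cos_sq θ)
  have hsin_cube (θ : ℝ) : HasDerivAt (fun θ => sin θ ^ 3 / 3) (sin θ ^ 2 * cos θ) θ :=
    (((hasDerivAt_sin θ).fun_pow 3).div_const 3).congr_deriv (by norm_num; ring)
  have hparts := vonMisesIntegral_deriv hsin_cube (by fun_prop) (by simp) x
  have hcube : (fun θ => sin θ ^ 3 / 3 * sin θ) = fun θ => 3⁻¹ * sin θ ^ 4 := by ext; ring
  rw [hcube, vonMisesIntegral_const_mul] at hparts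
  rw [← vonMisesIntegral_const_mul, ← vonMisesIntegral_sub (by fun_prop) (by fun_prop),
    vonMisesIntegral_deriv hsin_cos (by fun_prop) (by simp) x,
    show (fun θ => sin θ * cos θ * sin θ) = fun θ => sin θ ^ 2 * cos θ by ext; ring, hparts]
  ring

lemma V_eq_mul_vonMisesMean_sin_sq (x : ℝ) : V x = x * vonMisesMean (fun θ => sin θ ^ 2) x := by
  rw [V_eq_vonMisesMean_cos, vonMisesMean, vonMisesMean, vonMisesIntegral_cos, mul_div_assoc]

lemma vonMisesMean_sin_sq_pos (x : ℝ) : 0 < vonMisesMean (fun θ => sin θ ^ 2) x :=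
  div_pos (vonMisesIntegral_pos (c := π / 2) (by fun_prop) (fun θ => sq_nonneg _)
    ⟨by positivity, by linarith [pi_pos]⟩ (by simp) x) (vonMisesIntegral_one_pos x)

lemma vonMisesMean_sin_sq_zero : vonMisesMean (fun θ => sin θ ^ 2) 0 = 1 / 2 := by
  have h := vonMisesIntegral_one_sub_two_mul_sin_sq 0
  have hA := vonMisesIntegral_one_pos 0
  rw [vonMisesMean, div_eq_iff hA.ne']
  linarith

lemma vonMisesMean_sin_sq_lt_half {x : ℝ} (hx : x ≠ 0) :
    vonMisesMean (fun θ => sin θ ^ 2) x < 1 / 2 := by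
  have h := vonMisesIntegral_one_sub_two_mul_sin_sq x
  have hsin4 := vonMisesIntegral_pos (g := fun θ => sin θ ^ 4) (c := π / 2) (by fun_prop)
    (fun θ => by positivity) ⟨by positivity, by linarith [pi_pos]⟩ (by simp) x
  have : 0 < x ^ 2 / 3 * vonMisesIntegral (fun θ => sin θ ^ 4) x := by positivity
  rw [vonMisesMean, div_lt_iff₀ (vonMisesIntegral_one_pos x)]
  linarith

lemma V_lt_one (x : ℝ) : V x < 1 := by
  have h := vonMisesIntegral_pos (g := fun θ => 1 - cos θ) (by fun_prop)
    (fun θ => sub_nonneg.2 (cos_le_one θ)) ⟨pi_pos.le, by linarith [pi_pos]⟩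
    (by norm_num) x
  rw [vonMisesIntegral_sub (by fun_prop) (by fun_prop)] at h
  rw [V_eq_vonMisesMean_cos, vonMisesMean, div_lt_one (vonMisesIntegral_one_pos x)]
  linarith

lemma V_eq_self_iff {K r : ℝ} (hr : r ≠ 0) :
    r = V (K * r) ↔ K * vonMisesMean (fun θ => sin θ ^ 2) (K * r) = 1 := by
  rw [V_eq_mul_vonMisesMean_sin_sq, mul_right_comm, eq_comm, mul_eq_right₀ hr]

lemma two_lt_of_V_eq_self {K r : ℝ} (hr : 0 < r) (hfix : r = V (K * r)) : 2 < K := by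
  have hK := (V_eq_self_iff hr.ne').1 hfix
  have hKr : K * r ≠ 0 := mul_ne_zero (left_ne_zero_of_mul_eq_one hK) hr.ne'
  nlinarith [vonMisesMean_sin_sq_pos (K * r), vonMisesMean_sin_sq_lt_half hKr]

lemma exists_V_eq_self {K : ℝ} (hK : 2 < K) : ∃ r, 0 < r ∧ r = V (K * r) := by
  set h : ℝ → ℝ := fun r => K * vonMisesMean (fun θ => sin θ ^ 2) (K * r)
  have h_cont : ContinuousOn h (Icc 0 1) :=
    (continuous_const.mul ((continuous_vonMisesMean (by fun_prop)).comp
      (continuous_const.mul continuous_id))).continuousOn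
  have h_zero : 1 < h 0 := by simp only [h, mul_zero, vonMisesMean_sin_sq_zero]; linarith
  have h_one : h 1 < 1 := by
    simpa only [h, mul_one, ← V_eq_mul_vonMisesMean_sin_sq] using V_lt_one K
  obtain ⟨r, hr, hr_eq⟩ := intermediate_value_Icc' zero_le_one h_cont ⟨h_one.le, h_zero.le⟩
  have hr0 : r ≠ 0 := by rintro rfl; exact h_zero.ne' hr_eq
  exact ⟨r, lt_of_le_of_ne hr.1 hr0.symm, (V_eq_self_iff hr0).2 hr_eq⟩

end

theorem positive_fixed_point_iff (K : ℝ) :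
    ((∃ r : ℝ, 0 < r ∧ r = V (K * r)) ↔ 2 < K) ∧
      ∀ r : ℝ, 0 < r → r = V (K * r) → r ∈ Ioo (0:ℝ) 1 :=
  ⟨⟨fun ⟨_, hr, hfix⟩ => two_lt_of_V_eq_self hr hfix, exists_V_eq_self⟩,
    fun r hr hfix => ⟨hr, hfix ▸ V_lt_one (K * r)⟩⟩
end
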